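/- Assume that n exists and that n ≤ m + 1. Then for every integer i with 1 ≤ i ≤ m there exists an index j ∈ {1, …, s} such that β + iα − e_j ∈ K° + K°. -/
import Mathlib


open Finset Pointwise

/-- Elements of `ℤ^s`, compared componentwise. -/
abbrev Vec (s : ℕ) := Fin s → ℤ

/-- A good local semigroup `S ⊆ ℕ^s` (encoded as a set of nonnegative vectors of `ℤ^s`):
`0 ∈ S`, `S + S ⊆ S`, closure under componentwise minima (G1), property (G2),
existence of a conductor (G3), and locality (G4). -/
def GoodLocal {s : ℕ} (S : Set (Vec s)) : Prop :=
  (∀ a ∈ S, 0 ≤ a) ∧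
  (0 : Vec s) ∈ S ∧
  (∀ a ∈ S, ∀ b ∈ S, a + b ∈ S) ∧
  (∀ a ∈ S, ∀ b ∈ S, a ⊓ b ∈ S) ∧
  (∀ a ∈ S, ∀ b ∈ S, ∀ i : Fin s, a i = b i →
    ∃ ε ∈ S, a i < ε i ∧
      ∀ j : Fin s, j ≠ i → min (a j) (b j) ≤ ε j ∧ (a j ≠ b j → ε j = min (a j) (b j))) ∧
  (∃ c : Vec s, 0 ≤ c ∧ ∀ x : Vec s, 0 ≤ x → c + x ∈ S) ∧
  (∀ a ∈ S, (∃ i, a i = 0) → a = 0)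

/-- `Δ^S(a) = {b ∈ S : b_i = a_i for some i, and b_j > a_j for all j ≠ i}`. -/
def Delta {s : ℕ} (S : Set (Vec s)) (a : Vec s) : Set (Vec s) :=
  {b ∈ S | ∃ i : Fin s, b i = a i ∧ ∀ j : Fin s, j ≠ i → a j < b j}

/-- The canonical ideal `K = {a ∈ ℤ^s : Δ^S(γ - a) = ∅}` where `γ = β - (1,…,1)`. -/
def Kideal {s : ℕ} (S : Set (Vec s)) (β : Vec s) : Set (Vec s) :=
  {a : Vec s | Delta S (β - 1 - a) = ∅}

/-- `K° = {a ∈ K : a < β}`. -/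
def Kcirc {s : ℕ} (S : Set (Vec s)) (β : Vec s) : Set (Vec s) :=
  {a ∈ Kideal S β | a < β}

/-- `R_i = {a ∈ ℕ^s : (i-1)α < a < iα}`. -/
def Rset {s : ℕ} (α : Vec s) (i : ℤ) : Set (Vec s) :=
  {a : Vec s | 0 ≤ a ∧ (i - 1) • α < a ∧ a < i • α}

/-- Filling lemma: if some element of `S` sits at level `β i - 1` in coordinate `i`
with all other coordinates `≥ β`, then every such vector is in `S`. -/
lemma fill_lemma {s : ℕ} {S : Set (Vec s)} (hS : GoodLocal S) {β : Vec s}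
    (hβ₂ : ∀ x : Vec s, 0 ≤ x → β + x ∈ S) (hβpos : ∀ c, 1 ≤ β c) (i : Fin s) :
    ∀ d : ℕ, ∀ z : Vec s, z ∈ S → z i = β i - 1 → (∀ l, l ≠ i → β l ≤ z l) →
      ∀ y : Vec s, y i = β i - 1 → (∀ l, l ≠ i → β l ≤ y l) →
      (∑ l, if l = i then 0 else (y l - z l).toNat) ≤ d → y ∈ S := by
  obtain ⟨hnn, h0, hadd, hmin, hG2, hG3, hG4⟩ := hS
  intro d
  induction d with
  | zero =>
    intro z hz hzi hzl y hyi hyl hsum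
    have hall : ∀ l, l ≠ i → y l ≤ z l := by
      intro l hl
      have h1 : (if l = i then 0 else (y l - z l).toNat) = 0 := by
        have := Finset.sum_eq_zero_iff.mp (Nat.le_zero.mp hsum) l (Finset.mem_univ l)
        exact this
      rw [if_neg hl] at h1
      omega
    -- y = z ⊓ (y + single i (β i))
    have hY : y + Pi.single i (β i) ∈ S := by
      have h1 : (0:Vec s) ≤ y + Pi.single i (β i) - β := by
        intro l
        by_cases hl : l = i
        · subst hl
          simp [Pi.single_apply, hyi]
          have := hβpos l; omega
        · simp [Pi.single_apply, hl]
          have := hyl l hl; omega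
      have := hβ₂ _ h1
      simpa using this
    have := hmin z hz _ hY
    have heq : z ⊓ (y + Pi.single i (β i)) = y := by
      funext l
      by_cases hl : l = i
      · subst hl
        simp [Pi.inf_apply, Pi.single_apply, hzi, hyi]
        have := hβpos l; omega
      · simp [Pi.inf_apply, Pi.single_apply, hl]
        have := hall l hl
        omega
    rwa [heq] at this
  | succ d ih =>
    intro z hz hzi hzl y hyi hyl hsum
    by_cases hcase : ∀ l, l ≠ i → y l ≤ z l
    · -- same finishing argument, deficiency 0
      apply ih z hz hzi hzl y hyi hyl
      have : (∑ l, if l = i then 0 else (y l - z l).toNat) = 0 := by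
        apply Finset.sum_eq_zero
        intro l _
        by_cases hl : l = i
        · simp [hl]
        · rw [if_neg hl]
          have := hcase l hl; omega
      omega
    · push_neg at hcase
      obtain ⟨l₀, hl₀i, hl₀⟩ := hcase
      -- construct w ∈ S agreeing with z at l₀, much larger elsewhere
      have hw : z + β - (Pi.single l₀ (β l₀) : Vec s) ∈ S := by
        have h1 : (0:Vec s) ≤ z - (Pi.single l₀ (β l₀) : Vec s) := by
          intro l
          by_cases hl : l = l₀
          · subst hl
            simp [Pi.single_apply]
            have := hzl l hl₀i; omega
          · simp [Pi.single_apply, hl]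
            exact hnn z hz l
        have := hβ₂ _ h1
        have heq : β + (z - (Pi.single l₀ (β l₀) : Vec s)) = z + β - (Pi.single l₀ (β l₀) : Vec s) := by
          ring
        rwa [heq] at this
      have hagree : z l₀ = (z + β - (Pi.single l₀ (β l₀) : Vec s)) l₀ := by
        simp [Pi.single_apply]
      obtain ⟨ε, hε, hεl₀, hεrest⟩ := hG2 z hz _ hw l₀ hagree
      have hεval : ∀ l, l ≠ l₀ → ε l = z l := by
        intro l hl
        have hexp : (z + β - (Pi.single l₀ (β l₀) : Vec s)) l = z l + β l := by
          simp [Pi.single_apply, hl]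
        have h2 := (hεrest l hl).2
        have hne : z l ≠ (z + β - (Pi.single l₀ (β l₀) : Vec s)) l := by
          rw [hexp]; have := hβpos l; omega
        rw [h2 hne, hexp]
        have := hβpos l; omega
      apply ih ε hε
      · rw [hεval i (fun h => hl₀i (h ▸ rfl))]; exact hzi
      · intro l hl
        by_cases hll : l = l₀
        · subst hll
          have := hzl l hl; omega
        · rw [hεval l hll]; exact hzl l hl
      · exact hyi
      · exact hyl
      · -- sum decreased
        have hlt : (∑ l, if l = i then 0 else (y l - ε l).toNat)
            < (∑ l, if l = i then 0 else (y l - z l).toNat) := by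
          apply Finset.sum_lt_sum
          · intro l _
            by_cases hl : l = i
            · simp [hl]
            · rw [if_neg hl, if_neg hl]
              by_cases hll : l = l₀
              · subst hll; omega
              · rw [hεval l hll]
            
          · refine ⟨l₀, Finset.mem_univ l₀, ?_⟩
            rw [if_neg hl₀i, if_neg hl₀i]
            omega
        omega

/-- `Δ^S(γ) = ∅` where `γ = β - 1`. -/
lemma delta_gamma_empty {s : ℕ} {S : Set (Vec s)} (hS : GoodLocal S) {β : Vec s}
    (hβ₂ : ∀ x : Vec s, 0 ≤ x → β + x ∈ S)
    (hβ₃ : ∀ c : Vec s, 0 ≤ c → (∀ x : Vec s, 0 ≤ x → c + x ∈ S) → β ≤ c)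
    (hβpos : ∀ c, 1 ≤ β c) :
    Delta S (β - 1) = ∅ := by
  rw [Set.eq_empty_iff_forall_notMem]
  rintro z ⟨hz, i, hzi, hzgt⟩
  have hzi' : z i = β i - 1 := by simpa using hzi
  have hzl : ∀ l, l ≠ i → β l ≤ z l := by
    intro l hl
    have := hzgt l hl
    simp [Pi.sub_apply, Pi.one_apply] at this
    omega
  -- β - e_i is a conductor
  have hcond : ∀ x : Vec s, 0 ≤ x → (β - Pi.single i 1) + x ∈ S := by
    intro x hx
    by_cases hxi : 1 ≤ x i
    · have h1 : (0:Vec s) ≤ x - Pi.single i 1 := by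
        intro l
        by_cases hl : l = i
        · subst hl; simp [Pi.single_apply]; omega
        · simp [Pi.single_apply, hl]; exact hx l
      have := hβ₂ _ h1
      have heq : β + (x - Pi.single i 1) = (β - Pi.single i 1) + x := by ring
      rwa [heq] at this
    · have hxi0 : x i = 0 := le_antisymm (by omega) (hx i)
      apply fill_lemma hS hβ₂ hβpos i _ z hz hzi' hzl ((β - Pi.single i 1) + x)
      · simp [Pi.single_apply, hxi0]
      · intro l hl
        simp [Pi.single_apply, hl]
        have h' : (0:ℤ) ≤ x l := hx l
        omega
      · exact le_refl _
  have h0le : (0:Vec s) ≤ β - Pi.single i 1 := by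
    intro l
    by_cases hl : l = i
    · subst hl; simp [Pi.single_apply]; have := hβpos l; omega
    · simp [Pi.single_apply, hl]; have := hβpos l; omega
  have := hβ₃ _ h0le hcond i
  simp [Pi.single_apply] at this

/-- `S ⊆ K`. -/
lemma S_subset_K {s : ℕ} {S : Set (Vec s)} (hS : GoodLocal S) {β : Vec s}
    (hβ₂ : ∀ x : Vec s, 0 ≤ x → β + x ∈ S)
    (hβ₃ : ∀ c : Vec s, 0 ≤ c → (∀ x : Vec s, 0 ≤ x → c + x ∈ S) → β ≤ c)
    (hβpos : ∀ c, 1 ≤ β c) {a : Vec s} (ha : a ∈ S) :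
    a ∈ Kideal S β := by
  have hΔ := delta_gamma_empty hS hβ₂ hβ₃ hβpos
  show Delta S (β - 1 - a) = ∅
  rw [Set.eq_empty_iff_forall_notMem]
  rintro b ⟨hb, k, hbk, hbgt⟩
  have : a + b ∈ Delta S (β - 1) := by
    refine ⟨hS.2.2.1 a ha b hb, k, ?_, ?_⟩
    · simp only [Pi.add_apply, Pi.sub_apply, Pi.one_apply] at hbk ⊢
      omega
    · intro l hl
      have := hbgt l hl
      simp only [Pi.add_apply, Pi.sub_apply, Pi.one_apply] at this ⊢
      omega
  rw [hΔ] at this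
  exact this

lemma natmul_mem_S {s : ℕ} {S : Set (Vec s)} (hS : GoodLocal S) {α : Vec s} (hα₁ : α ∈ S) :
    ∀ k : ℕ, (k : ℤ) • α ∈ S := by
  intro k
  induction k with
  | zero => simpa using hS.2.1
  | succ k ih =>
    have := hS.2.2.1 _ ih _ hα₁
    have heq : ((k:ℤ) + 1) • α = (k:ℤ) • α + α := by
      rw [add_smul, one_smul]
    push_cast
    rw [heq]
    exact this

lemma gap_lemma {s : ℕ} {S : Set (Vec s)} (hS : GoodLocal S) {α : Vec s} (hα₁ : α ∈ S)
    (hαpos : ∀ c, 1 ≤ α c) {n : ℤ}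
    (hn₃ : ∀ n' : ℤ, 1 ≤ n' → (Rset α n' ∩ S).Nonempty → n ≤ n')
    (q : ℕ) (hq : (q:ℤ) + 1 ≤ n - 1) {w : Vec s} (hw0 : 0 ≤ w) (hwne : w ≠ 0)
    (hwα : w ≤ α) {j : Fin s} (hwj : w j < α j) :
    Delta S ((q:ℤ) • α + w + Pi.single j 1 - 1) = ∅ := by
  obtain ⟨hnn, h0, hadd, hmin, hG2, hG3, hG4⟩ := hS
  rw [Set.eq_empty_iff_forall_notMem]
  rintro b ⟨hb, k, hbk, hbgt⟩
  have hT : ∀ l, ((q:ℤ) • α + w + (Pi.single j 1 : Vec s) - 1) l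
      = (q:ℤ) * α l + w l + (if l = j then 1 else 0) - 1 := by
    intro l
    simp [Pi.single_apply, smul_eq_mul]
  rw [hT k] at hbk
  have hbgt' : ∀ l, l ≠ k → (q:ℤ) * α l + w l + (if l = j then 1 else 0) ≤ b l := by
    intro l hl
    have := hbgt l hl
    rw [hT l] at this
    omega
  -- a coordinate where w is positive
  obtain ⟨c₀, hc₀⟩ : ∃ c₀, 1 ≤ w c₀ := by
    by_contra hcon
    push_neg at hcon
    apply hwne
    funext l
    have h1 := hw0 l
    have h2 := hcon l
    simp only [Pi.zero_apply] at h1 ⊢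
    omega
  by_cases hkj : k = j
  · -- case k = j
    subst hkj
    have hbj : b k = (q:ℤ) * α k + w k := by simpa using hbk
    set c := b ⊓ (((q:ℤ)+1) • α) with hc
    have hq1S : ((q:ℤ)+1) • α ∈ S := by
      have := natmul_mem_S ⟨hnn, h0, hadd, hmin, hG2, hG3, hG4⟩ hα₁ (q+1)
      push_cast at this
      exact this
    have hcS : c ∈ S := hmin b hb _ hq1S
    have hclow : ∀ l, (q:ℤ) * α l ≤ c l := by
      intro l
      apply le_min
      · by_cases hl : l = k
        · subst hl; have := hw0 l; simp only [Pi.zero_apply] at this; omega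
        · have := hbgt' l hl
          have h2 := hw0 l
          simp only [Pi.zero_apply] at h2
          omega
      · have h3 : ((q:ℤ)+1) * α l = (q:ℤ) * α l + α l := by ring
        have := hαpos l
        rw [Pi.smul_apply, smul_eq_mul]
        omega
    have hclow₀ : (q:ℤ) * α c₀ + 1 ≤ c c₀ := by
      apply le_min
      · by_cases hl : c₀ = k
        · subst hl; omega
        · have := hbgt' c₀ hl; omega
      · have h3 : ((q:ℤ)+1) * α c₀ = (q:ℤ) * α c₀ + α c₀ := by ring
        have := hαpos c₀
        rw [Pi.smul_apply, smul_eq_mul]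
        omega
    have hchigh : c k < ((q:ℤ)+1) * α k := by
      have h1 : c k ≤ b k := min_le_left _ _
      have h3 : ((q:ℤ)+1) * α k = (q:ℤ) * α k + α k := by ring
      omega
    have hmem : c ∈ Rset α ((q:ℤ)+1) := by
      refine ⟨hnn c hcS, ?_, ?_⟩
      · rw [show (q:ℤ)+1-1 = (q:ℤ) by ring]
        rw [Pi.lt_def]
        refine ⟨fun l => by rw [Pi.smul_apply, smul_eq_mul]; exact hclow l, c₀, ?_⟩
        rw [Pi.smul_apply, smul_eq_mul]
        omega
      · rw [Pi.lt_def]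
        refine ⟨inf_le_right, k, ?_⟩
        rw [Pi.smul_apply, smul_eq_mul]
        exact hchigh
    have := hn₃ ((q:ℤ)+1) (by omega) ⟨c, hmem, hcS⟩
    omega
  · -- case k ≠ j
    have hbk' : b k = (q:ℤ) * α k + w k - 1 := by
      rw [if_neg hkj] at hbk; omega
    have hbj : (q:ℤ) * α j + w j + 1 ≤ b j := by
      have := hbgt' j (Ne.symm hkj)
      rw [if_pos rfl] at this
      omega
    by_cases hwk : 1 ≤ w k
    · set c := b ⊓ (((q:ℤ)+1) • α) with hc
      have hq1S : ((q:ℤ)+1) • α ∈ S := by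
        have := natmul_mem_S ⟨hnn, h0, hadd, hmin, hG2, hG3, hG4⟩ hα₁ (q+1)
        push_cast at this
        exact this
      have hcS : c ∈ S := hmin b hb _ hq1S
      have hclow : ∀ l, (q:ℤ) * α l ≤ c l := by
        intro l
        apply le_min
        · by_cases hl : l = k
          · subst hl; omega
          · have := hbgt' l hl
            have h2 := hw0 l
            simp only [Pi.zero_apply] at h2
            by_cases hlj : l = j
            · subst hlj; rw [if_pos rfl] at this; omega
            · rw [if_neg hlj] at this; omega
        · have h3 : ((q:ℤ)+1) * α l = (q:ℤ) * α l + α l := by ring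
          have := hαpos l
          rw [Pi.smul_apply, smul_eq_mul]
          omega
      have hclowj : (q:ℤ) * α j + 1 ≤ c j := by
        apply le_min
        · have h2 := hw0 j
          simp only [Pi.zero_apply] at h2
          omega
        · have h3 : ((q:ℤ)+1) * α j = (q:ℤ) * α j + α j := by ring
          have := hαpos j
          rw [Pi.smul_apply, smul_eq_mul]
          omega
      have hchigh : c k < ((q:ℤ)+1) * α k := by
        have h1 : c k ≤ b k := min_le_left _ _
        have h3 : ((q:ℤ)+1) * α k = (q:ℤ) * α k + α k := by ring
        have h4 : w k ≤ α k := hwα k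
        omega
      have hmem : c ∈ Rset α ((q:ℤ)+1) := by
        refine ⟨hnn c hcS, ?_, ?_⟩
        · rw [show (q:ℤ)+1-1 = (q:ℤ) by ring]
          rw [Pi.lt_def]
          refine ⟨fun l => by rw [Pi.smul_apply, smul_eq_mul]; exact hclow l, j, ?_⟩
          rw [Pi.smul_apply, smul_eq_mul]
          omega
        · rw [Pi.lt_def]
          refine ⟨inf_le_right, k, ?_⟩
          rw [Pi.smul_apply, smul_eq_mul]
          exact hchigh
      have := hn₃ ((q:ℤ)+1) (by omega) ⟨c, hmem, hcS⟩
      omega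
    · -- w k = 0
      have hwk0 : w k = 0 := by
        have := hw0 k
        simp only [Pi.zero_apply] at this
        omega
      by_cases hq0 : q = 0
      · have hbneg : b k = -1 := by rw [hbk', hwk0, hq0]; ring
        have := hnn b hb k
        simp only [Pi.zero_apply] at this
        omega
      · have hq1 : (1:ℤ) ≤ (q:ℤ) := by omega
        set c := b ⊓ ((q:ℤ) • α) with hc
        have hqS : (q:ℤ) • α ∈ S := natmul_mem_S ⟨hnn, h0, hadd, hmin, hG2, hG3, hG4⟩ hα₁ q
        have hcS : c ∈ S := hmin b hb _ hqS
        have hck : c k = (q:ℤ) * α k - 1 := by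
          have : b k = (q:ℤ) * α k - 1 := by rw [hbk', hwk0]; ring
          rw [hc, Pi.inf_apply, Pi.smul_apply, smul_eq_mul, this]
          omega
        have hclow : ∀ l, l ≠ k → (q:ℤ) * α l ≤ c l := by
          intro l hl
          apply le_min
          · have := hbgt' l hl
            have h2 := hw0 l
            simp only [Pi.zero_apply] at h2
            by_cases hlj : l = j
            · subst hlj; rw [if_pos rfl] at this; omega
            · rw [if_neg hlj] at this; omega
          · rw [Pi.smul_apply, smul_eq_mul]
        have hmem : c ∈ Rset α (q:ℤ) := by
          refine ⟨hnn c hcS, ?_, ?_⟩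
          · rw [Pi.lt_def]
            constructor
            · intro l
              rw [Pi.smul_apply, smul_eq_mul]
              have h3 : ((q:ℤ)-1) * α l = (q:ℤ) * α l - α l := by ring
              by_cases hl : l = k
              · rw [hl]
                have h3k : ((q:ℤ)-1) * α k = (q:ℤ) * α k - α k := by ring
                linarith [hαpos k, hck.le, hck.ge]
              · linarith [hclow l hl, hαpos l]
            · refine ⟨j, ?_⟩
              rw [Pi.smul_apply, smul_eq_mul]
              have h3 : ((q:ℤ)-1) * α j = (q:ℤ) * α j - α j := by ring
              linarith [hclow j (Ne.symm hkj), hαpos j]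
          · rw [Pi.lt_def]
            refine ⟨inf_le_right, k, ?_⟩
            rw [Pi.smul_apply, smul_eq_mul]
            omega
        have := hn₃ (q:ℤ) hq1 ⟨c, hmem, hcS⟩
        omega

/-- For every `1 ≤ i ≤ m` there is an index `j` with `β + iα - e_j ∈ K° + K°`. -/
theorem beta_plus_i_alpha_minus_e_mem
    (s : ℕ) (hs : 1 ≤ s) (S : Set (Vec s)) (hS : GoodLocal S)
    (hSne : S ≠ {a : Vec s | 0 ≤ a}) (α β : Vec s)
    (hα₁ : α ∈ S) (hα₂ : α ≠ 0) (hα₃ : ∀ a ∈ S, a ≠ 0 → α ≤ a)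
    (hβ₁ : 0 ≤ β) (hβ₂ : ∀ x : Vec s, 0 ≤ x → β + x ∈ S)
    (hβ₃ : ∀ c : Vec s, 0 ≤ c → (∀ x : Vec s, 0 ≤ x → c + x ∈ S) → β ≤ c)
    (m : ℤ) (hm₁ : (m + 1) • α ≤ β) (hm₂ : ∀ m' : ℤ, (m' + 1) • α ≤ β → m' ≤ m)
    (n : ℤ) (hn₁ : 1 ≤ n) (hn₂ : (Rset α n ∩ S).Nonempty)
    (hn₃ : ∀ n' : ℤ, 1 ≤ n' → (Rset α n' ∩ S).Nonempty → n ≤ n')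
    (hnm : n ≤ m + 1) :
    ∀ i : ℤ, 1 ≤ i → i ≤ m →
      ∃ j : Fin s, β + i • α - Pi.single j 1 ∈ Kcirc S β + Kcirc S β := by
  intro i hi1 him
  obtain ⟨hnn, h0, hadd, hmin, hG2, hG3, hG4⟩ := id hS
  have hm1 : 1 ≤ m := le_trans hi1 him
  -- α has all coordinates ≥ 1
  have hαpos : ∀ c, 1 ≤ α c := by
    intro c
    by_contra h
    have h1 : (0:Vec s) c ≤ α c := hnn α hα₁ c
    simp only [Pi.zero_apply] at h1
    have : α c = 0 := by omega
    exact hα₂ (hG4 α hα₁ ⟨c, this⟩)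
  -- β has all coordinates ≥ 1
  have hβpos : ∀ c, 1 ≤ β c := by
    intro c
    have h := hm₁ c
    rw [Pi.smul_apply, smul_eq_mul] at h
    nlinarith [hαpos c]
  -- the element x ∈ R_n ∩ S
  obtain ⟨x, hxR, hxS⟩ := hn₂
  obtain ⟨hx0, hx1, hx2⟩ := hxR
  -- n ≥ 2
  have hn2 : 2 ≤ n := by
    by_contra h
    have hn1' : n = 1 := by omega
    rw [hn1'] at hx1 hx2
    have h1 : ((1:ℤ) - 1) • α = (0 : Vec s) := by norm_num
    rw [h1] at hx1
    have hxne : x ≠ 0 := (lt_iff_le_and_ne.mp hx1).2.symm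
    have hle := hα₃ x hxS hxne
    rw [one_smul] at hx2
    exact absurd (lt_of_le_of_lt hle hx2) (lt_irrefl α)
  -- scalar facts about x
  have hx1le : ∀ l, (n-1) * α l ≤ x l := by
    intro l
    have h := hx1.le
    rw [Pi.le_def] at h
    have := h l
    rwa [Pi.smul_apply, smul_eq_mul] at this
  have hx2le : ∀ l, x l ≤ n * α l := by
    intro l
    have h := hx2.le
    rw [Pi.le_def] at h
    have := h l
    rwa [Pi.smul_apply, smul_eq_mul] at this
  -- w = x - (n-1)α
  set w : Vec s := x - ((n:ℤ)-1) • α with hwdef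
  have hwl : ∀ l, w l = x l - (n-1) * α l := by
    intro l
    rw [hwdef]
    simp [smul_eq_mul]
  have hw0 : (0:Vec s) ≤ w := by
    intro l
    rw [hwl l]
    simp only [Pi.zero_apply]
    linarith [hx1le l]
  have hwne : w ≠ 0 := by
    intro h
    have : x = ((n:ℤ)-1) • α := by
      have := sub_eq_zero.mp (hwdef ▸ h)
      exact this
    exact (lt_iff_le_and_ne.mp hx1).2 this.symm
  have hwα : w ≤ α := by
    intro l
    rw [hwl l]
    have h3 : n * α l = (n-1) * α l + α l := by ring
    linarith [hx2le l]
  have hwαne : w ≠ α := by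
    intro h
    apply (lt_iff_le_and_ne.mp hx2).2
    funext l
    have hcf := congrFun h l
    rw [hwl l] at hcf
    rw [Pi.smul_apply, smul_eq_mul]
    linarith
  -- pick j with w j < α j
  obtain ⟨j, hwj⟩ : ∃ j, w j < α j := by
    by_contra h
    push_neg at h
    exact hwαne (funext fun l => le_antisymm (hwα l) (h l))
  refine ⟨j, ?_⟩
  -- main construction, uniform in r and p
  have key : ∀ r p : ℤ, 0 ≤ r → 0 ≤ p → p - r = i - n + 1 → r + 2 ≤ n → n + p ≤ m + 1 →
      β + i • α - Pi.single j 1 ∈ Kcirc S β + Kcirc S β := by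
    intro r p hr0 hp0 hpr hrn hnp
    -- u = x + p α
    have hpα : p • α ∈ S := by
      have := natmul_mem_S hS hα₁ p.toNat
      rwa [Int.toNat_of_nonneg hp0] at this
    have huS : x + p • α ∈ S := hadd x hxS _ hpα
    have huK : x + p • α ∈ Kideal S β := S_subset_K hS hβ₂ hβ₃ hβpos huS
    have hule : ∀ l, (x + p • α) l ≤ β l := by
      intro l
      simp only [Pi.add_apply, Pi.smul_apply, smul_eq_mul]
      have h1 := hx2le l
      have h2 : (n + p) * α l ≤ (m + 1) * α l :=
        mul_le_mul_of_nonneg_right hnp (by linarith [hαpos l])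
      have h3 := hm₁ l
      rw [Pi.smul_apply, smul_eq_mul] at h3
      nlinarith
    have hustrict : ∃ c', (x + p • α) c' < β c' := by
      obtain ⟨hle', c', hc'⟩ := Pi.lt_def.mp hx2
      refine ⟨c', ?_⟩
      rw [Pi.smul_apply, smul_eq_mul] at hc'
      simp only [Pi.add_apply, Pi.smul_apply, smul_eq_mul]
      have h2 : (n + p) * α c' ≤ (m + 1) * α c' :=
        mul_le_mul_of_nonneg_right hnp (by linarith [hαpos c'])
      have h3 := hm₁ c'
      rw [Pi.smul_apply, smul_eq_mul] at h3
      nlinarith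
    have hult : x + p • α < β := by
      rw [Pi.lt_def]
      exact ⟨hule, hustrict⟩
    have hu : x + p • α ∈ Kcirc S β := ⟨huK, hult⟩
    -- v = β - r α - w - e_j
    have hveq : β - 1 - (β - r • α - w - Pi.single j 1) = (r.toNat:ℤ) • α + w + (Pi.single j 1 : Vec s) - 1 := by
      rw [Int.toNat_of_nonneg hr0]
      ring
    have hvK : β - r • α - w - Pi.single j 1 ∈ Kideal S β := by
      show Delta S _ = ∅
      rw [hveq]
      exact gap_lemma hS hα₁ hαpos hn₃ r.toNat
        (by rw [Int.toNat_of_nonneg hr0]; omega) hw0 hwne hwα hwj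
    have hvlt : β - r • α - w - Pi.single j 1 < β := by
      rw [Pi.lt_def]
      constructor
      · intro l
        simp only [Pi.sub_apply, Pi.smul_apply, smul_eq_mul, Pi.single_apply]
        have h1 : 0 ≤ r * α l := mul_nonneg hr0 (by linarith [hαpos l])
        have h2 := hw0 l
        simp only [Pi.zero_apply] at h2
        by_cases hl : l = j
        · subst hl
          simp only [if_pos rfl, if_true, eq_self_iff_true]
          linarith
        · simp only [if_neg hl]
          linarith
      · refine ⟨j, ?_⟩
        simp only [Pi.sub_apply, Pi.smul_apply, smul_eq_mul, Pi.single_apply, if_pos rfl,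
          if_true, eq_self_iff_true]
        have h1 : 0 ≤ r * α j := mul_nonneg hr0 (by linarith [hαpos j])
        have h2 := hw0 j
        simp only [Pi.zero_apply] at h2
        linarith
    have hv : β - r • α - w - Pi.single j 1 ∈ Kcirc S β := ⟨hvK, hvlt⟩
    have hsum : (x + p • α) + (β - r • α - w - Pi.single j 1) = β + i • α - Pi.single j 1 := by
      funext l
      simp only [Pi.add_apply, Pi.sub_apply, Pi.smul_apply, smul_eq_mul]
      rw [hwl l]
      linear_combination (α l) * hpr
    rw [← hsum]
    exact Set.add_mem_add hu hv
  rcases le_or_gt (n - 1) i with hcase | hcase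
  · exact key 0 (i - n + 1) le_rfl (by omega) (by ring) (by omega) (by omega)
  · exact key (n - 1 - i) 0 (by omega) le_rfl (by ring) (by omega) (by omega)
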